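/- Let m and n be positive integers with n ≡ 3 (mod 4). If the sum S_2 over k from 0 to mn+(n-1)/2 of (1+q^{4k+1})(q^2;q^4)_k^3/((1+q)(q^4;q^4)_k^3)·q^k is divisible by Φ_n(q)^2, then so is the sum S_1 over k from 0 to (m+1)n-1 of the same summand, because for each k with mn+(n-1)/2 < k ≤ (m+1)n-1 the individual summand (q^2;q^4)_k^3/(q^4;q^4)_k^3 is divisible by Φ_n(q)^3. -/

import Mathlib

open Polynomial Finset

/-! Over `ℚ`, `1 - q^M` is squarefree and divisible by the prime `Φ_n(q)` exactly when `n ∣ M`,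
so the `Φ_n`-adic valuation of `∏ (1 - q^{M_i})` is the number of `M_i` divisible by `n`.
For odd `n`, `n ∣ 4i + 2` iff `i ≡ (n-1)/2 (mod n)` and `n ∣ 4i + 4` iff `i ≡ -1 (mod n)`;
in the range `mn + (n-1)/2 < k < (m+1)n` this leaves `m + 1` factors of `Φ_n` in `(q^2;q^4)_k`
against `m` in `(q^4;q^4)_k`, so the quotient has valuation exactly `1`. -/

/-- The variable `q` as an element of the field of rational functions `ℚ(q)`. -/
noncomputable def Q : RatFunc ℚ := RatFunc.X

/-- The q-shifted factorial `(a;b)_k = (1-a)(1-ab)⋯(1-ab^{k-1})` in `ℚ(q)`. -/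
noncomputable def qPoch (a b : RatFunc ℚ) (k : ℕ) : RatFunc ℚ :=
  ∏ i ∈ Finset.range k, (1 - a * b ^ i)

theorem qPoch_Q_pow (a d k : ℕ) :
    qPoch (Q ^ a) (Q ^ d) k =
      algebraMap ℚ[X] (RatFunc ℚ) (∏ i ∈ range k, (1 - X ^ (d * i + a))) := by
  simp only [qPoch, Q, map_prod, map_sub, map_one, map_pow, RatFunc.algebraMap_X, ← pow_mul,
    ← pow_add, add_comm]

theorem Prime.exists_prod_eq_pow_card_filter_mul {α ι : Type*} [CommMonoidWithZero α] {p : α}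
    (hp : Prime p) (s : Finset ι) (f : ι → α) (P : ι → Prop) [DecidablePred P]
    (hP : ∀ i ∈ s, p ∣ f i ↔ P i) (hsq : ∀ i ∈ s, ¬ p ^ 2 ∣ f i) :
    ∃ d, ∏ i ∈ s, f i = p ^ #{i ∈ s | P i} * d ∧ ¬ p ∣ d := by
  classical
  induction s using Finset.induction_on with
  | empty => exact ⟨1, by simp, hp.not_dvd_one⟩
  | insert a s ha ih =>
    obtain ⟨d, hd, hpd⟩ := ih (fun i hi => hP i (mem_insert_of_mem hi))
      (fun i hi => hsq i (mem_insert_of_mem hi))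
    rw [prod_insert ha, hd, filter_insert]
    by_cases hpa : p ∣ f a
    · obtain ⟨g, hg⟩ := hpa
      have hpg : ¬ p ∣ g := fun ⟨h, hh⟩ =>
        hsq a (mem_insert_self a s) ⟨h, by rw [hg, hh, ← mul_assoc, sq]⟩
      refine ⟨g * d, ?_, fun h => (hp.dvd_or_dvd h).elim hpg hpd⟩
      rw [if_pos ((hP a (mem_insert_self a s)).1 ⟨g, hg⟩),
        card_insert_of_notMem (fun h => ha (mem_filter.1 h).1), hg, pow_succ]
      ac_rfl
    · refine ⟨f a * d, ?_, fun h => (hp.dvd_or_dvd h).elim hpa hpd⟩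
      rw [if_neg fun h => hpa ((hP a (mem_insert_self a s)).2 h), mul_left_comm]

theorem cyclotomic_dvd_X_pow_sub_one_iff {n M : ℕ} (hn : 0 < n) (hM : 0 < M) :
    cyclotomic n ℚ ∣ X ^ M - 1 ↔ n ∣ M := by
  have hp : Prime (cyclotomic n ℚ) := (cyclotomic.irreducible_rat hn).prime
  rw [← prod_cyclotomic_eq_X_pow_sub_one hM]
  refine ⟨fun h => ?_, fun h => dvd_prod_of_mem _ (Nat.mem_divisors.2 ⟨h, hM.ne'⟩)⟩
  obtain ⟨d, hd, hdvd⟩ := (hp.dvd_finsetProd_iff _).1 h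
  obtain rfl : n = d := by
    by_contra hne
    exact hp.not_isUnit ((cyclotomic.isCoprime_rat hne).isUnit_of_dvd' dvd_rfl hdvd)
  exact Nat.dvd_of_mem_divisors hd

theorem squarefree_X_pow_sub_one {M : ℕ} (hM : 0 < M) : Squarefree (X ^ M - 1 : ℚ[X]) := by
  simpa using (separable_X_pow_sub_C (1 : ℚ) (by positivity) one_ne_zero).squarefree

theorem exists_prod_one_sub_X_pow_eq_cyclotomic_pow_mul {ι : Type*} {n : ℕ} (hn : 0 < n)
    (s : Finset ι) (M : ι → ℕ) (hM : ∀ i ∈ s, 0 < M i) :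
    ∃ d, ∏ i ∈ s, (1 - X ^ M i : ℚ[X]) = cyclotomic n ℚ ^ #{i ∈ s | n ∣ M i} * d ∧
      ¬ cyclotomic n ℚ ∣ d := by
  have hp : Prime (cyclotomic n ℚ) := (cyclotomic.irreducible_rat hn).prime
  refine hp.exists_prod_eq_pow_card_filter_mul s _ _ (fun i hi => ?_) (fun i hi h => ?_)
  · rw [dvd_sub_comm, cyclotomic_dvd_X_pow_sub_one_iff hn (hM i hi)]
  · rw [dvd_sub_comm, sq] at h
    exact hp.not_isUnit (squarefree_X_pow_sub_one (hM i hi) _ h)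

theorem card_filter_range_dvd_add_succ (n a k : ℕ) :
    #{i ∈ range k | n ∣ a + i + 1} = (a + k) / n - a / n := by
  have h := Nat.count_add (fun e => n ∣ e + 1) a k
  simp only [Nat.count_eq_card_filter_range, Nat.card_multiples] at h
  rw [h, Nat.add_sub_cancel_left]

theorem card_filter_range_dvd_four_mul_add_two {m n k : ℕ} (hn : Odd n)
    (hk1 : m * n + n / 2 < k) (hk2 : k < (m + 1) * n) :
    #{i ∈ range k | n ∣ 4 * i + 2} = m + 1 := by
  obtain ⟨t, rfl⟩ := hn
  have h2 : Nat.Coprime (2 * t + 1) 2 := Nat.coprime_two_right.2 (odd_two_mul_add_one t)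
  have hiff : ∀ i, 2 * t + 1 ∣ 4 * i + 2 ↔ 2 * t + 1 ∣ t + i + 1 := fun i => by
    rw [show 4 * i + 2 = 2 * (2 * i + 1) by ring, h2.dvd_mul_left,
      ← h2.dvd_mul_left (n := t + i + 1),
      show 2 * (t + i + 1) = (2 * t + 1) + (2 * i + 1) by ring, Nat.dvd_add_right dvd_rfl]
  have ht : (2 * t + 1) / 2 = t := by omega
  rw [ht] at hk1
  rw [filter_congr fun i _ => hiff i, card_filter_range_dvd_add_succ,
    Nat.div_eq_of_lt_le (k := m + 1) (by linarith) (by linarith),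
    Nat.div_eq_of_lt_le (k := 0) (by simp) (by omega), Nat.sub_zero]

theorem card_filter_range_dvd_four_mul_add_four {m n k : ℕ} (hn : Odd n)
    (hk1 : m * n ≤ k) (hk2 : k < (m + 1) * n) :
    #{i ∈ range k | n ∣ 4 * i + 4} = m := by
  have h4 : Nat.Coprime n 4 := (Nat.coprime_two_right.2 hn).pow_right 2
  have hiff : ∀ i, n ∣ 4 * i + 4 ↔ n ∣ i + 1 := fun i => by
    rw [show 4 * i + 4 = 4 * (i + 1) by ring, h4.dvd_mul_left]
  rw [filter_congr fun i _ => hiff i, Nat.card_multiples, Nat.div_eq_of_lt_le hk1 hk2]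

theorem stmt17_general (m n k : ℕ) (h : n % 4 = 3)
    (hk1 : m * n + (n - 1) / 2 < k) (hk2 : k ≤ (m + 1) * n - 1) :
    ∃ a b : Polynomial ℚ, ¬ (Polynomial.cyclotomic n ℚ ∣ b) ∧
      (qPoch (Q ^ 2) (Q ^ 4) k ^ 3 / qPoch (Q ^ 4) (Q ^ 4) k ^ 3)
        * algebraMap (Polynomial ℚ) (RatFunc ℚ) b
      = algebraMap (Polynomial ℚ) (RatFunc ℚ) (Polynomial.cyclotomic n ℚ ^ 3 * a) := by
  have hn : 0 < n := by omega
  have hodd : Odd n := Nat.odd_iff.2 (by omega)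
  have hk : k < (m + 1) * n := (Nat.le_sub_one_iff_lt (by positivity)).1 hk2
  obtain ⟨N, hN, -⟩ := exists_prod_one_sub_X_pow_eq_cyclotomic_pow_mul hn (range k)
    (fun i => 4 * i + 2) (by simp)
  obtain ⟨D, hD, hΦD⟩ := exists_prod_one_sub_X_pow_eq_cyclotomic_pow_mul hn (range k)
    (fun i => 4 * i + 4) (by simp)
  rw [card_filter_range_dvd_four_mul_add_two hodd (by omega) hk] at hN
  rw [card_filter_range_dvd_four_mul_add_four hodd (by omega) hk] at hD
  have hΦ : (algebraMap ℚ[X] (RatFunc ℚ)) (cyclotomic n ℚ) ≠ 0 :=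
    RatFunc.algebraMap_ne_zero (cyclotomic_ne_zero n ℚ)
  have hD0 : (algebraMap ℚ[X] (RatFunc ℚ)) D ≠ 0 :=
    RatFunc.algebraMap_ne_zero fun h0 => hΦD (h0 ▸ dvd_zero _)
  refine ⟨N ^ 3, D ^ 3,
    fun h3 => hΦD ((cyclotomic.irreducible_rat hn).prime.dvd_of_dvd_pow h3), ?_⟩
  rw [qPoch_Q_pow, qPoch_Q_pow, hN, hD]
  simp only [map_mul, map_pow]
  field_simp
  ring

/-- For positive integers `m, n` with `n ≡ 3 (mod 4)` and `mn+(n-1)/2 < k ≤ (m+1)n-1`,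
the rational function `(q^2;q^4)_k^3/(q^4;q^4)_k^3` has `Φ_n(q)`-adic valuation at least 3. -/
theorem stmt17 (m n k : ℕ) (hm : 0 < m) (hn : 0 < n) (h : n % 4 = 3)
    (hk1 : m * n + (n - 1) / 2 < k) (hk2 : k ≤ (m + 1) * n - 1) :
    ∃ a b : Polynomial ℚ, ¬ (Polynomial.cyclotomic n ℚ ∣ b) ∧
      (qPoch (Q ^ 2) (Q ^ 4) k ^ 3 / qPoch (Q ^ 4) (Q ^ 4) k ^ 3)
        * algebraMap (Polynomial ℚ) (RatFunc ℚ) b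
      = algebraMap (Polynomial ℚ) (RatFunc ℚ) (Polynomial.cyclotomic n ℚ ^ 3 * a) :=
  stmt17_general m n k h hk1 hk2
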